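/- arXiv:2107.09864 — 2 statements merged into one kernel-verified Lean document; each statement's English description precedes it below -/
import Mathlib

section
/- If there exist positive vectors u ∈ (ℝ₊*)^n, v ∈ (ℝ₊*)^m such that the matrix π with π_{ij} = u_i exp(−c_{ij}/γ) v_j is a transport plan between p and q, then π is the unique minimizer of the entropically regularized optimal transport problem with parameter γ. -/
open scoped BigOperators

def IsCoupling {n m : ℕ} (π : Matrix (Fin n) (Fin m) ℝ) (p : Fin n → ℝ) (q : Fin m → ℝ) : Prop :=
  (∀ i j, 0 ≤ π i j) ∧ (∀ i, ∑ j, π i j = p i) ∧ (∀ j, ∑ i, π i j = q j)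

def IsProbVec {k : ℕ} (p : Fin k → ℝ) : Prop := (∀ i, 0 ≤ p i) ∧ ∑ i, p i = 1

noncomputable def transportCost {n m : ℕ} (c π : Matrix (Fin n) (Fin m) ℝ) : ℝ :=
  ∑ i, ∑ j, c i j * π i j

noncomputable def OTval {n m : ℕ} (p : Fin n → ℝ) (q : Fin m → ℝ)
    (c : Matrix (Fin n) (Fin m) ℝ) : ℝ :=
  sInf {x | ∃ π, IsCoupling π p q ∧ x = transportCost c π}

noncomputable def negEntropy {n m : ℕ} (π : Matrix (Fin n) (Fin m) ℝ) : ℝ :=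
  ∑ i, ∑ j, π i j * Real.log (π i j)

noncomputable def regObj {n m : ℕ} (γ : ℝ) (c π : Matrix (Fin n) (Fin m) ℝ) : ℝ :=
  transportCost c π + γ * negEntropy π

lemma klterm_nonneg {a b : ℝ} (ha : 0 ≤ a) (hb : 0 < b) :
    0 ≤ a * Real.log a - a * Real.log b - a + b := by
  rcases ha.eq_or_lt with h | h
  · rw [← h]; simpa using hb.le
  · have hlog := Real.log_le_sub_one_of_pos (div_pos hb h)
    rw [Real.log_div hb.ne' h.ne'] at hlog
    have h2 := mul_le_mul_of_nonneg_left hlog h.le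
    rw [mul_sub, mul_sub, mul_div_cancel₀ _ h.ne'] at h2
    nlinarith

lemma klterm_pos {a b : ℝ} (ha : 0 ≤ a) (hb : 0 < b) (hab : a ≠ b) :
    0 < a * Real.log a - a * Real.log b - a + b := by
  rcases ha.eq_or_lt with h | h
  · rw [← h]; simpa using hb
  · have hne : b / a ≠ 1 := by
      rw [Ne, div_eq_one_iff_eq h.ne']; exact Ne.symm hab
    have hlog := Real.log_lt_sub_one_of_pos (div_pos hb h) hne
    rw [Real.log_div hb.ne' h.ne'] at hlog
    have h2 := mul_lt_mul_of_pos_left hlog h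
    rw [mul_sub, mul_sub, mul_div_cancel₀ _ h.ne'] at h2
    nlinarith

lemma regObj_formula {n m : ℕ} (p : Fin n → ℝ) (q : Fin m → ℝ)
    (c : Matrix (Fin n) (Fin m) ℝ) (γ : ℝ) (hγ : 0 < γ)
    (u : Fin n → ℝ) (v : Fin m → ℝ)
    (π : Matrix (Fin n) (Fin m) ℝ)
    (hc : ∀ i j, c i j = γ * (Real.log (u i) + Real.log (v j) - Real.log (π i j)))
    (ρ : Matrix (Fin n) (Fin m) ℝ) (hρ : IsCoupling ρ p q) :
    regObj γ c ρ = γ * ((∑ i, p i * Real.log (u i)) + (∑ j, q j * Real.log (v j)))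
      + γ * ∑ i, ∑ j, (ρ i j * Real.log (ρ i j) - ρ i j * Real.log (π i j)) := by
  obtain ⟨hρ0, hρr, hρc⟩ := hρ
  unfold regObj transportCost negEntropy
  have step : ∀ i j, c i j * ρ i j =
      γ * (Real.log (u i) * ρ i j) + γ * (Real.log (v j) * ρ i j)
        - γ * (ρ i j * Real.log (π i j)) := by
    intro i j; rw [hc]; ring
  rw [Finset.sum_congr rfl fun i _ => Finset.sum_congr rfl fun j _ => step i j]
  simp only [Finset.sum_sub_distrib, Finset.sum_add_distrib, ← Finset.mul_sum]
  have h1 : ∑ i, Real.log (u i) * ∑ j, ρ i j = ∑ i, p i * Real.log (u i) :=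
    Finset.sum_congr rfl fun i _ => by rw [hρr i, mul_comm]
  have h2 : ∑ i, ∑ j, Real.log (v j) * ρ i j = ∑ j, q j * Real.log (v j) := by
    rw [Finset.sum_comm]
    exact Finset.sum_congr rfl fun j _ => by rw [← Finset.mul_sum, hρc j, mul_comm]
  rw [h1, h2]
  ring

theorem sinkhorn_scaling_characterizes_minimizer {n m : ℕ} (p : Fin n → ℝ) (q : Fin m → ℝ)
    (hp : IsProbVec p) (hq : IsProbVec q)
    (hppos : ∀ i, 0 < p i) (hqpos : ∀ j, 0 < q j)
    (c : Matrix (Fin n) (Fin m) ℝ) (γ : ℝ) (hγ : 0 < γ)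
    (u : Fin n → ℝ) (v : Fin m → ℝ) (hu : ∀ i, 0 < u i) (hv : ∀ j, 0 < v j)
    (π : Matrix (Fin n) (Fin m) ℝ)
    (hπ : ∀ i j, π i j = u i * Real.exp (-(c i j) / γ) * v j)
    (hcoup : IsCoupling π p q) :
    ∀ π' : Matrix (Fin n) (Fin m) ℝ, IsCoupling π' p q → π' ≠ π →
      regObj γ c π < regObj γ c π' := by
  intro π' hcoup' hne
  have hπpos : ∀ i j, 0 < π i j := by
    intro i j; rw [hπ]; exact mul_pos (mul_pos (hu i) (Real.exp_pos _)) (hv j)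
  have hc : ∀ i j, c i j = γ * (Real.log (u i) + Real.log (v j) - Real.log (π i j)) := by
    intro i j
    rw [hπ i j, Real.log_mul (mul_pos (hu i) (Real.exp_pos _)).ne' (hv j).ne', Real.log_mul (hu i).ne'
      (Real.exp_ne_zero _), Real.log_exp]
    field_simp
    ring
  have F := regObj_formula p q c γ hγ u v π hc
  rw [F π hcoup, F π' hcoup']
  have hself : (∑ i, ∑ j, (π i j * Real.log (π i j) - π i j * Real.log (π i j))) = 0 := by
    simp
  rw [hself]
  have hmass : (∑ i, ∑ j, (π' i j - π i j)) = 0 := by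
    have hrow : ∀ i, ∑ j, (π' i j - π i j) = 0 := fun i => by
      rw [Finset.sum_sub_distrib, hcoup'.2.1 i, hcoup.2.1 i]; ring
    simp [hrow]
  have hS : 0 < ∑ i, ∑ j, (π' i j * Real.log (π' i j) - π' i j * Real.log (π i j)) := by
    have hrw : (∑ i, ∑ j, (π' i j * Real.log (π' i j) - π' i j * Real.log (π i j)))
        = ∑ i, ∑ j, (π' i j * Real.log (π' i j) - π' i j * Real.log (π i j)
            - π' i j + π i j) := by
      have := hmass
      simp only [Finset.sum_sub_distrib, Finset.sum_add_distrib] at this ⊢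
      linarith
    rw [hrw]
    obtain ⟨i₀, j₀, hij⟩ : ∃ i j, π' i j ≠ π i j := by
      by_contra h
      push_neg at h
      exact hne (by ext i j; exact h i j)
    have hterm : ∀ i j, 0 ≤ π' i j * Real.log (π' i j) - π' i j * Real.log (π i j)
        - π' i j + π i j := fun i j => klterm_nonneg (hcoup'.1 i j) (hπpos i j)
    apply Finset.sum_pos'
    · intro i _
      exact Finset.sum_nonneg fun j _ => hterm i j
    · refine ⟨i₀, Finset.mem_univ _, ?_⟩
      apply Finset.sum_pos'
      · intro j _; exact hterm i₀ j
      · exact ⟨j₀, Finset.mem_univ _, klterm_pos (hcoup'.1 i₀ j₀) (hπpos i₀ j₀) hij⟩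
  nlinarith
end

section
/- The 1-Wasserstein distance between the laws of scenario trees is not a continuous modulus for the multistage value function: for every M > 0 and δ > 0 there exist two three-stage scenario trees X, Y with W₁(law(X), law(Y)) ≤ δ but |v(X) − v(Y)| ≥ M, where v is the optimal single-purchase stopping value. -/
open scoped BigOperators

/-- Paths of the tree X: X₀ = A; up-scenario (A, A+ε, 2A), down-scenario (A, A−ε, 0),
each with probability 1/2. -/
noncomputable def Xpath (A ε : ℝ) : Fin 2 → Fin 3 → ℝ :=
  ![![A, A + ε, 2 * A], ![A, A - ε, 0]]

/-- Paths of the tree Y: Y₀ = Y₁ = A; Y₂ = 2A or 0, each with probability 1/2. -/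
noncomputable def Ypath (A : ℝ) : Fin 2 → Fin 3 → ℝ :=
  ![![A, A, 2 * A], ![A, A, 0]]

/-- 1-Wasserstein distance between the laws of (X₀,X₁,X₂) and (Y₀,Y₁,Y₂) with ℓ¹ cost. -/
noncomputable def W1XY (A ε : ℝ) : ℝ :=
  sInf {x | ∃ π : Matrix (Fin 2) (Fin 2) ℝ,
    IsCoupling π (fun _ => (2 : ℝ)⁻¹) (fun _ => (2 : ℝ)⁻¹) ∧
    x = transportCost (fun i j => ∑ t, |Xpath A ε i t - Ypath A j t|) π}

/-- Optimal single-purchase stopping value for the tree X:  controls u ω t ∈ {0,1},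
exactly one purchase per scenario, and adaptedness u 0 0 = u 1 0 (the root is common). -/
noncomputable def vX (A ε : ℝ) : ℝ :=
  sInf {x | ∃ u : Fin 2 → Fin 3 → ℝ,
    (∀ ω t, u ω t = 0 ∨ u ω t = 1) ∧ (∀ ω, ∑ t, u ω t = 1) ∧
    u 0 0 = u 1 0 ∧
    x = ∑ ω, (2 : ℝ)⁻¹ * ∑ t, Xpath A ε ω t * u ω t}

/-- Optimal single-purchase stopping value for the tree Y: here the natural filtration is
trivial up to time 1, so u 0 0 = u 1 0 and u 0 1 = u 1 1. -/
noncomputable def vY (A : ℝ) : ℝ :=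
  sInf {x | ∃ u : Fin 2 → Fin 3 → ℝ,
    (∀ ω t, u ω t = 0 ∨ u ω t = 1) ∧ (∀ ω, ∑ t, u ω t = 1) ∧
    u 0 0 = u 1 0 ∧ u 0 1 = u 1 1 ∧
    x = ∑ ω, (2 : ℝ)⁻¹ * ∑ t, Ypath A ω t * u ω t}

section Aux

lemma vY_eq (A : ℝ) : vY A = A := by
  have hmem : A ∈ {x | ∃ u : Fin 2 → Fin 3 → ℝ,
      (∀ ω t, u ω t = 0 ∨ u ω t = 1) ∧ (∀ ω, ∑ t, u ω t = 1) ∧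
      u 0 0 = u 1 0 ∧ u 0 1 = u 1 1 ∧
      x = ∑ ω, (2 : ℝ)⁻¹ * ∑ t, Ypath A ω t * u ω t} := by
    refine ⟨fun _ => ![1, 0, 0], ?_, ?_, rfl, rfl, ?_⟩
    · intro ω t; fin_cases t <;> simp
    · intro ω; simp [Fin.sum_univ_three]
    · simp [Ypath, Fin.sum_univ_three, Fin.sum_univ_two]; ring
  have hall : ∀ x ∈ {x | ∃ u : Fin 2 → Fin 3 → ℝ,
      (∀ ω t, u ω t = 0 ∨ u ω t = 1) ∧ (∀ ω, ∑ t, u ω t = 1) ∧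
      u 0 0 = u 1 0 ∧ u 0 1 = u 1 1 ∧
      x = ∑ ω, (2 : ℝ)⁻¹ * ∑ t, Ypath A ω t * u ω t}, x = A := by
    rintro x ⟨u, _, hsum, h00, h01, rfl⟩
    have h0 := hsum 0
    have h1 := hsum 1
    simp [Fin.sum_univ_three] at h0 h1
    simp [Ypath, Fin.sum_univ_three, Fin.sum_univ_two]
    linear_combination A * h0 - (A/2) * h00 - (A/2) * h01
  unfold vY
  exact le_antisymm (csInf_le ⟨A, fun x hx => (hall x hx).ge⟩ hmem)
    (le_csInf ⟨A, hmem⟩ fun x hx => (hall x hx).symm.le)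

lemma vX_mem (A ε : ℝ) : (A + ε) / 2 ∈ {x | ∃ u : Fin 2 → Fin 3 → ℝ,
    (∀ ω t, u ω t = 0 ∨ u ω t = 1) ∧ (∀ ω, ∑ t, u ω t = 1) ∧
    u 0 0 = u 1 0 ∧
    x = ∑ ω, (2 : ℝ)⁻¹ * ∑ t, Xpath A ε ω t * u ω t} := by
  refine ⟨![![0, 1, 0], ![0, 0, 1]], ?_, ?_, rfl, ?_⟩
  · intro ω t; fin_cases ω <;> fin_cases t <;> simp
  · intro ω; fin_cases ω <;> simp [Fin.sum_univ_three]
  · simp [Xpath, Fin.sum_univ_three, Fin.sum_univ_two]; ring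

lemma vX_bdd (A ε : ℝ) (h1 : 0 ≤ A - ε) (h2 : 0 ≤ A) (h3 : 0 ≤ ε) :
    ∀ x ∈ {x | ∃ u : Fin 2 → Fin 3 → ℝ,
      (∀ ω t, u ω t = 0 ∨ u ω t = 1) ∧ (∀ ω, ∑ t, u ω t = 1) ∧
      u 0 0 = u 1 0 ∧
      x = ∑ ω, (2 : ℝ)⁻¹ * ∑ t, Xpath A ε ω t * u ω t}, (0:ℝ) ≤ x := by
  rintro x ⟨u, hu01, _, _, rfl⟩
  have hu : ∀ ω t, 0 ≤ u ω t := by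
    intro ω t; rcases hu01 ω t with h | h <;> simp [h]
  have hX : ∀ (ω : Fin 2) (t : Fin 3), 0 ≤ Xpath A ε ω t := by
    intro ω t; fin_cases ω <;> fin_cases t <;> simp [Xpath] <;> linarith
  refine Finset.sum_nonneg fun ω _ => mul_nonneg (by norm_num) ?_
  exact Finset.sum_nonneg fun t _ => mul_nonneg (hX ω t) (hu ω t)

lemma vX_le (A ε : ℝ) (h1 : 0 ≤ A - ε) (h2 : 0 ≤ A) (h3 : 0 ≤ ε) : vX A ε ≤ (A + ε) / 2 :=
  csInf_le ⟨0, vX_bdd A ε h1 h2 h3⟩ (vX_mem A ε)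

lemma vX_nonneg (A ε : ℝ) (h1 : 0 ≤ A - ε) (h2 : 0 ≤ A) (h3 : 0 ≤ ε) : 0 ≤ vX A ε :=
  le_csInf ⟨(A + ε) / 2, vX_mem A ε⟩ (vX_bdd A ε h1 h2 h3)

lemma W1XY_le (A ε : ℝ) (hε : 0 ≤ ε) : W1XY A ε ≤ ε := by
  have hmem : ε ∈ {x | ∃ π : Matrix (Fin 2) (Fin 2) ℝ,
      IsCoupling π (fun _ => (2 : ℝ)⁻¹) (fun _ => (2 : ℝ)⁻¹) ∧
      x = transportCost (fun i j => ∑ t, |Xpath A ε i t - Ypath A j t|) π} := by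
    refine ⟨![![2⁻¹, 0], ![0, 2⁻¹]], ⟨?_, ?_, ?_⟩, ?_⟩
    · intro i j; fin_cases i <;> fin_cases j <;> norm_num
    · intro i; fin_cases i <;> simp [Fin.sum_univ_two]
    · intro j; fin_cases j <;> simp [Fin.sum_univ_two]
    · simp [transportCost, Xpath, Ypath, Fin.sum_univ_two, Fin.sum_univ_three,
        abs_of_nonneg hε]
      ring
  have hbdd : ∀ x ∈ {x | ∃ π : Matrix (Fin 2) (Fin 2) ℝ,
      IsCoupling π (fun _ => (2 : ℝ)⁻¹) (fun _ => (2 : ℝ)⁻¹) ∧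
      x = transportCost (fun i j => ∑ t, |Xpath A ε i t - Ypath A j t|) π}, (0:ℝ) ≤ x := by
    rintro x ⟨π, ⟨hπ, _, _⟩, rfl⟩
    refine Finset.sum_nonneg fun i _ => Finset.sum_nonneg fun j _ => mul_nonneg ?_ (hπ i j)
    exact Finset.sum_nonneg fun t _ => abs_nonneg _
  exact csInf_le ⟨0, hbdd⟩ hmem

end Aux

theorem wasserstein_not_continuity_modulus_for_MSP :
    ∀ M > (0 : ℝ), ∀ δ > (0 : ℝ), ∃ A ε : ℝ, 0 < ε ∧ ε < A ∧
      W1XY A ε ≤ δ ∧ M ≤ |vX A ε - vY A| := by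
  intro M hM δ hδ
  refine ⟨2 * M + δ, δ, hδ, by linarith, ?_, ?_⟩
  · have := W1XY_le (2 * M + δ) δ hδ.le
    linarith
  · have h1 : (0:ℝ) ≤ (2 * M + δ) - δ := by linarith
    have h2 : (0:ℝ) ≤ 2 * M + δ := by linarith
    have hle := vX_le (2 * M + δ) δ h1 h2 hδ.le
    have hnn := vX_nonneg (2 * M + δ) δ h1 h2 hδ.le
    rw [vY_eq]
    rw [abs_of_nonpos (by linarith)]
    linarith
end
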